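/- arXiv:2004.10368 — 2 statements merged into one kernel-verified Lean document; each statement's English description precedes it below -/
import Mathlib

section
/- Call a triple (A,B,C) of hypermatrices in C^{n×n×n} uncorrelated if Prod(A,B,C) = Δ, the Kronecker delta hypermatrix. If X, Y ∈ C^{n×n×n} satisfy Prod(X, X^{⊤²}, X^⊤) = Δ and Prod(Y, Y^{⊤²}, Y^⊤) = Δ, then Prod(X⊗Y, (X⊗Y)^{⊤²}, (X⊗Y)^⊤) = Δ ⊗ Δ, where ⊗ is the Kronecker product of third-order hypermatrices defined by (X⊗Y)[(i₀,i₁),(j₀,j₁),(k₀,k₁)] = X[i₀,j₀,k₀]·Y[i₁,j₁,k₁]. -/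
noncomputable def bmProd {ι : Type*} [Fintype ι] (A B C : ι → ι → ι → ℂ) : ι → ι → ι → ℂ :=
  fun i j k => ∑ t, A i t k * B i j t * C t j k

noncomputable def htr {ι : Type*} (A : ι → ι → ι → ℂ) : ι → ι → ι → ℂ :=
  fun i j k => A k i j

noncomputable def hdelta {ι : Type*} [DecidableEq ι] : ι → ι → ι → ℂ :=
  fun i j k => if i = j ∧ j = k then 1 else 0

/-- Kronecker product of third-order hypermatrices. -/
noncomputable def hkron {ι κ : Type*} (X : ι → ι → ι → ℂ) (Y : κ → κ → κ → ℂ) :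
    ι × κ → ι × κ → ι × κ → ℂ :=
  fun i j k => X i.1 j.1 k.1 * Y i.2 j.2 k.2

theorem kron_orthogonal {n : ℕ} (X Y : Fin n → Fin n → Fin n → ℂ)
    (hX : bmProd X (htr (htr X)) (htr X) = hdelta)
    (hY : bmProd Y (htr (htr Y)) (htr Y) = hdelta) :
    bmProd (hkron X Y) (htr (htr (hkron X Y))) (htr (hkron X Y)) =
      hkron hdelta hdelta := by
  funext i j k
  have hX' := congrFun (congrFun (congrFun hX i.1) j.1) k.1
  have hY' := congrFun (congrFun (congrFun hY i.2) j.2) k.2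
  simp only [bmProd, htr, hkron] at *
  rw [← hX', ← hY', Fintype.sum_prod_type, Finset.sum_mul_sum]
  congr 1; funext a; congr 1; funext b; ring
end

section
/- If X ∈ C^{m×m×m} and Y ∈ C^{n×n×n} satisfy Prod(X, X^{⊤²}, X^⊤) = Δ_m and Prod(Y, Y^{⊤²}, Y^⊤) = Δ_n, then the direct sum X ⊕ Y ∈ C^{(m+n)×(m+n)×(m+n)} satisfies Prod(X⊕Y, (X⊕Y)^{⊤²}, (X⊕Y)^⊤) = Δ_m ⊕ Δ_n = Δ_{m+n}. -/
/-- Direct sum of cubic third-order hypermatrices. -/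
noncomputable def hdsum {m n : ℕ} (X : Fin m → Fin m → Fin m → ℂ) (Y : Fin n → Fin n → Fin n → ℂ) :
    Fin (m + n) → Fin (m + n) → Fin (m + n) → ℂ :=
  fun i j k =>
    if h : i.val < m ∧ j.val < m ∧ k.val < m then
      X ⟨i.val, h.1⟩ ⟨j.val, h.2.1⟩ ⟨k.val, h.2.2⟩
    else if h' : m ≤ i.val ∧ m ≤ j.val ∧ m ≤ k.val then
      Y ⟨i.val - m, by have := i.isLt; omega⟩
        ⟨j.val - m, by have := j.isLt; omega⟩
        ⟨k.val - m, by have := k.isLt; omega⟩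
    else 0

lemma hdsum_low {m n : ℕ} (X : Fin m → Fin m → Fin m → ℂ) (Y : Fin n → Fin n → Fin n → ℂ)
    (i j k : Fin (m + n)) (hi : i.val < m) (hj : j.val < m) (hk : k.val < m) :
    hdsum X Y i j k = X ⟨i.val, hi⟩ ⟨j.val, hj⟩ ⟨k.val, hk⟩ := by
  simp [hdsum, hi, hj, hk]

lemma hdsum_high {m n : ℕ} (X : Fin m → Fin m → Fin m → ℂ) (Y : Fin n → Fin n → Fin n → ℂ)
    (i j k : Fin (m + n)) (hi : m ≤ i.val) (hj : m ≤ j.val) (hk : m ≤ k.val) :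
    hdsum X Y i j k = Y ⟨i.val - m, by have := i.isLt; omega⟩
        ⟨j.val - m, by have := j.isLt; omega⟩ ⟨k.val - m, by have := k.isLt; omega⟩ := by
  rw [hdsum, dif_neg (by omega), dif_pos ⟨hi, hj, hk⟩]

lemma hdsum_zero {m n : ℕ} (X : Fin m → Fin m → Fin m → ℂ) (Y : Fin n → Fin n → Fin n → ℂ)
    (i j k : Fin (m + n))
    (h : ¬(i.val < m ↔ j.val < m) ∨ ¬(j.val < m ↔ k.val < m)) :
    hdsum X Y i j k = 0 := by
  rw [hdsum, dif_neg (by omega), dif_neg (by omega)]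

theorem dsum_orthogonal {m n : ℕ}
    (X : Fin m → Fin m → Fin m → ℂ) (Y : Fin n → Fin n → Fin n → ℂ)
    (hX : bmProd X (htr (htr X)) (htr X) = hdelta)
    (hY : bmProd Y (htr (htr Y)) (htr Y) = hdelta) :
    hdsum (hdelta : Fin m → Fin m → Fin m → ℂ) (hdelta : Fin n → Fin n → Fin n → ℂ) =
        hdelta ∧
    bmProd (hdsum X Y) (htr (htr (hdsum X Y))) (htr (hdsum X Y)) = hdelta := by
  constructor
  · funext i j k
    rcases Nat.lt_or_ge i.val m with hi | hi <;>
    rcases Nat.lt_or_ge j.val m with hj | hj <;>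
    rcases Nat.lt_or_ge k.val m with hk | hk
    · rw [hdsum_low _ _ _ _ _ hi hj hk]
      simp only [hdelta, Fin.mk.injEq]
      exact if_congr (by simp only [Fin.ext_iff]; try omega) rfl rfl
    · rw [hdsum_zero _ _ _ _ _ (by omega)]
      simp only [hdelta]
      rw [if_neg (by simp only [Fin.ext_iff]; omega)]
    · rw [hdsum_zero _ _ _ _ _ (by omega)]
      simp only [hdelta]
      rw [if_neg (by simp only [Fin.ext_iff]; omega)]
    · rw [hdsum_zero _ _ _ _ _ (by omega)]
      simp only [hdelta]
      rw [if_neg (by simp only [Fin.ext_iff]; omega)]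
    · rw [hdsum_zero _ _ _ _ _ (by omega)]
      simp only [hdelta]
      rw [if_neg (by simp only [Fin.ext_iff]; omega)]
    · rw [hdsum_zero _ _ _ _ _ (by omega)]
      simp only [hdelta]
      rw [if_neg (by simp only [Fin.ext_iff]; omega)]
    · rw [hdsum_zero _ _ _ _ _ (by omega)]
      simp only [hdelta]
      rw [if_neg (by simp only [Fin.ext_iff]; omega)]
    · rw [hdsum_high _ _ _ _ _ hi hj hk]
      simp only [hdelta, Fin.mk.injEq]
      exact if_congr (by simp only [Fin.ext_iff]; try omega) rfl rfl
  · funext i j k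
    simp only [bmProd, htr]
    rw [Fin.sum_univ_add]
    rcases Nat.lt_or_ge i.val m with hi | hi <;>
    rcases Nat.lt_or_ge j.val m with hj | hj <;>
    rcases Nat.lt_or_ge k.val m with hk | hk
    · -- all low
      have h2 : ∀ t : Fin n, hdsum X Y i (Fin.natAdd m t) k *
          hdsum X Y j (Fin.natAdd m t) i * hdsum X Y k (Fin.natAdd m t) j = 0 := by
        intro t
        have ht : (Fin.natAdd m t).val = m + t.val := rfl
        rw [hdsum_zero _ _ _ _ _ (by omega), zero_mul, zero_mul]
      rw [Finset.sum_congr rfl (fun t _ => h2 t), Finset.sum_const, smul_zero, add_zero]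
      have h1 : ∀ t : Fin m, hdsum X Y i (Fin.castAdd n t) k *
          hdsum X Y j (Fin.castAdd n t) i * hdsum X Y k (Fin.castAdd n t) j =
          X ⟨i.val, hi⟩ t ⟨k.val, hk⟩ * X ⟨j.val, hj⟩ t ⟨i.val, hi⟩ *
          X ⟨k.val, hk⟩ t ⟨j.val, hj⟩ := by
        intro t
        have ht : (Fin.castAdd n t).val < m := t.isLt
        rw [hdsum_low _ _ _ _ _ hi ht hk, hdsum_low _ _ _ _ _ hj ht hi,
          hdsum_low _ _ _ _ _ hk ht hj]
        simp only [Fin.coe_castAdd, Fin.eta]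
      rw [Finset.sum_congr rfl (fun t _ => h1 t)]
      have hXe := congrFun (congrFun (congrFun hX ⟨i.val, hi⟩) ⟨j.val, hj⟩) ⟨k.val, hk⟩
      simp only [bmProd, htr] at hXe
      rw [hXe]
      simp only [hdelta, Fin.mk.injEq]
      exact if_congr (by simp only [Fin.ext_iff]; try omega) rfl rfl
    · trans (0:ℂ) + 0
      · congr 1 <;>
        · apply Finset.sum_eq_zero
          intro t _
          first
            | have ht : (Fin.castAdd n t).val < m := t.isLt
            | have ht : (Fin.natAdd m t).val = m + t.val := rfl
          simp only [mul_eq_zero]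
          first
            | exact Or.inl (Or.inl (hdsum_zero _ _ _ _ _ (by omega)))
            | exact Or.inl (Or.inr (hdsum_zero _ _ _ _ _ (by omega)))
            | exact Or.inr (hdsum_zero _ _ _ _ _ (by omega))
      · rw [add_zero]
        simp only [hdelta]
        rw [if_neg (by simp only [Fin.ext_iff]; omega)]
    · trans (0:ℂ) + 0
      · congr 1 <;>
        · apply Finset.sum_eq_zero
          intro t _
          first
            | have ht : (Fin.castAdd n t).val < m := t.isLt
            | have ht : (Fin.natAdd m t).val = m + t.val := rfl
          simp only [mul_eq_zero]
          first
            | exact Or.inl (Or.inl (hdsum_zero _ _ _ _ _ (by omega)))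
            | exact Or.inl (Or.inr (hdsum_zero _ _ _ _ _ (by omega)))
            | exact Or.inr (hdsum_zero _ _ _ _ _ (by omega))
      · rw [add_zero]
        simp only [hdelta]
        rw [if_neg (by simp only [Fin.ext_iff]; omega)]
    · trans (0:ℂ) + 0
      · congr 1 <;>
        · apply Finset.sum_eq_zero
          intro t _
          first
            | have ht : (Fin.castAdd n t).val < m := t.isLt
            | have ht : (Fin.natAdd m t).val = m + t.val := rfl
          simp only [mul_eq_zero]
          first
            | exact Or.inl (Or.inl (hdsum_zero _ _ _ _ _ (by omega)))
            | exact Or.inl (Or.inr (hdsum_zero _ _ _ _ _ (by omega)))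
            | exact Or.inr (hdsum_zero _ _ _ _ _ (by omega))
      · rw [add_zero]
        simp only [hdelta]
        rw [if_neg (by simp only [Fin.ext_iff]; omega)]
    · trans (0:ℂ) + 0
      · congr 1 <;>
        · apply Finset.sum_eq_zero
          intro t _
          first
            | have ht : (Fin.castAdd n t).val < m := t.isLt
            | have ht : (Fin.natAdd m t).val = m + t.val := rfl
          simp only [mul_eq_zero]
          first
            | exact Or.inl (Or.inl (hdsum_zero _ _ _ _ _ (by omega)))
            | exact Or.inl (Or.inr (hdsum_zero _ _ _ _ _ (by omega)))
            | exact Or.inr (hdsum_zero _ _ _ _ _ (by omega))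
      · rw [add_zero]
        simp only [hdelta]
        rw [if_neg (by simp only [Fin.ext_iff]; omega)]
    · trans (0:ℂ) + 0
      · congr 1 <;>
        · apply Finset.sum_eq_zero
          intro t _
          first
            | have ht : (Fin.castAdd n t).val < m := t.isLt
            | have ht : (Fin.natAdd m t).val = m + t.val := rfl
          simp only [mul_eq_zero]
          first
            | exact Or.inl (Or.inl (hdsum_zero _ _ _ _ _ (by omega)))
            | exact Or.inl (Or.inr (hdsum_zero _ _ _ _ _ (by omega)))
            | exact Or.inr (hdsum_zero _ _ _ _ _ (by omega))
      · rw [add_zero]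
        simp only [hdelta]
        rw [if_neg (by simp only [Fin.ext_iff]; omega)]
    · trans (0:ℂ) + 0
      · congr 1 <;>
        · apply Finset.sum_eq_zero
          intro t _
          first
            | have ht : (Fin.castAdd n t).val < m := t.isLt
            | have ht : (Fin.natAdd m t).val = m + t.val := rfl
          simp only [mul_eq_zero]
          first
            | exact Or.inl (Or.inl (hdsum_zero _ _ _ _ _ (by omega)))
            | exact Or.inl (Or.inr (hdsum_zero _ _ _ _ _ (by omega)))
            | exact Or.inr (hdsum_zero _ _ _ _ _ (by omega))
      · rw [add_zero]
        simp only [hdelta]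
        rw [if_neg (by simp only [Fin.ext_iff]; omega)]
    · -- all high
      have h1 : ∀ t : Fin m, hdsum X Y i (Fin.castAdd n t) k *
          hdsum X Y j (Fin.castAdd n t) i * hdsum X Y k (Fin.castAdd n t) j = 0 := by
        intro t
        have ht : (Fin.castAdd n t).val < m := t.isLt
        rw [hdsum_zero _ _ _ _ _ (by omega), zero_mul, zero_mul]
      rw [Finset.sum_congr rfl (fun t _ => h1 t), Finset.sum_const, smul_zero, zero_add]
      have h2 : ∀ t : Fin n, hdsum X Y i (Fin.natAdd m t) k *
          hdsum X Y j (Fin.natAdd m t) i * hdsum X Y k (Fin.natAdd m t) j =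
          Y ⟨i.val - m, by have := i.isLt; omega⟩ t ⟨k.val - m, by have := k.isLt; omega⟩ *
          Y ⟨j.val - m, by have := j.isLt; omega⟩ t ⟨i.val - m, by have := i.isLt; omega⟩ *
          Y ⟨k.val - m, by have := k.isLt; omega⟩ t ⟨j.val - m, by have := j.isLt; omega⟩ := by
        intro t
        have ht : m ≤ (Fin.natAdd m t).val := Nat.le_add_right m t.val
        rw [hdsum_high _ _ _ _ _ hi ht hk, hdsum_high _ _ _ _ _ hj ht hi,
          hdsum_high _ _ _ _ _ hk ht hj]
        simp only [Fin.coe_natAdd, Nat.add_sub_cancel_left, Fin.eta]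
      rw [Finset.sum_congr rfl (fun t _ => h2 t)]
      have hYe := congrFun (congrFun (congrFun hY ⟨i.val - m, by have := i.isLt; omega⟩)
        ⟨j.val - m, by have := j.isLt; omega⟩) ⟨k.val - m, by have := k.isLt; omega⟩
      simp only [bmProd, htr] at hYe
      rw [hYe]
      simp only [hdelta, Fin.mk.injEq]
      exact if_congr (by simp only [Fin.ext_iff]; try omega) rfl rfl
end
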